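/- For every integer N ≥ 1, let SO(2N) := {g ∈ M_{2N}(ℝ) : gᵀ g = 1 and det g = 1}, a compact topological group, and let μ be its Haar probability measure. Then ∫_{SO(2N)} det(1 − g) dμ(g) = 2. -/

import Mathlib

/-!
Expanding `det (1 - g)` multilinearly in the rows writes it as the sum, over subsets `s` of the
index set, of the determinants of the matrices whose rows in `s` are those of `-g` and whose other
rows are those of `1`. For `∅ ≠ s ≠ univ` pick `i ∈ s` and `j ∉ s`; left multiplication by the
diagonal matrix `D` with entries `-1` at `i, j` and `1` elsewhere lies in `SO(2N)` and negates that
term, so by invariance its integral vanishes. The term `s = ∅` is `det 1 = 1`, and `s = univ` gives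
`det (-g) = det g = 1` in even dimension, so the integral is `1 + 1 = 2`.
-/

open MeasureTheory Matrix

/-- Matrices over a measurable space form a measurable space (componentwise). -/
instance matrixMeasurableSpace {l m α : Type*} [MeasurableSpace α] :
    MeasurableSpace (Matrix l m α) :=
  MeasurableSpace.pi

instance matrixBorelSpace {l m α : Type*} [Countable l] [Countable m] [TopologicalSpace α]
    [MeasurableSpace α] [SecondCountableTopology α] [BorelSpace α] :
    BorelSpace (Matrix l m α) :=
  inferInstanceAs (BorelSpace (l → m → α))

theorem integral_eq_zero_of_map_eq_of_comp_eq_neg {α E : Type*} [MeasurableSpace α]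
    [NormedAddCommGroup E] [NormedSpace ℝ E] {μ : Measure α} {φ : α → α} {f : α → E}
    (hφ : Measurable φ) (hμ : μ.map φ = μ) (hf : AEStronglyMeasurable f μ)
    (hodd : ∀ x, f (φ x) = -f x) :
    ∫ x, f x ∂μ = 0 := by
  have : IsAddTorsionFree E := .of_isTorsionFree ℝ E
  have hf' : AEStronglyMeasurable f (μ.map φ) := by rwa [hμ]
  rw [← self_eq_neg, ← integral_neg]
  simp_rw [← hodd]
  rw [← integral_map hφ.aemeasurable hf', hμ]

namespace Matrix

section CommRing

variable {n R : Type*} [Fintype n] [DecidableEq n] [CommRing R]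

def negRowsOn (s : Finset n) (g : Matrix n n R) : Matrix n n R :=
  of fun i j => if i ∈ s then -g i j else (1 : Matrix n n R) i j

omit [Fintype n] in
@[simp]
theorem negRowsOn_empty (g : Matrix n n R) : negRowsOn ∅ g = 1 := by
  ext i j
  simp [negRowsOn]

@[simp]
theorem negRowsOn_univ (g : Matrix n n R) : negRowsOn Finset.univ g = -g := by
  ext i j
  simp [negRowsOn]

theorem det_one_sub_eq_sum_det_negRowsOn (g : Matrix n n R) :
    (1 - g).det = ∑ s : Finset n, (negRowsOn s g).det := by
  have hrows (s : Finset n) :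
      s.piecewise (fun i => (-g) i) (fun i => (1 : Matrix n n R) i) = negRowsOn s g := by
    ext i j
    by_cases hi : i ∈ s <;> simp [negRowsOn, hi]
  have hsum : ((fun i => (-g) i) + fun i => (1 : Matrix n n R) i) = fun i => (1 - g) i := by
    ext i j
    simp [neg_add_eq_sub]
  have := (detRowAlternating (R := R)).map_add_univ (fun i => (-g) i) fun i => (1 : Matrix n n R) i
  simp only [hsum, hrows] at this
  exact this

theorem negRowsOn_diagonal_mul (s : Finset n) (ε : n → R) (g : Matrix n n R) :
    negRowsOn s (diagonal ε * g) = diagonal (fun i => if i ∈ s then ε i else 1) * negRowsOn s g := by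
  ext i j
  by_cases hi : i ∈ s <;> simp [negRowsOn, hi]

theorem det_negRowsOn_diagonal_mul (s : Finset n) (ε : n → R) (g : Matrix n n R) :
    (negRowsOn s (diagonal ε * g)).det = (∏ i ∈ s, ε i) * (negRowsOn s g).det := by
  rw [negRowsOn_diagonal_mul, det_mul, det_diagonal, Finset.prod_ite_mem, Finset.univ_inter]

def signDiagonal (t : Finset n) : Matrix n n R :=
  diagonal fun i => if i ∈ t then -1 else 1

theorem signDiagonal_transpose_mul_self (t : Finset n) :
    (signDiagonal t : Matrix n n R)ᵀ * signDiagonal t = 1 := by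
  rw [signDiagonal, diagonal_transpose, diagonal_mul_diagonal, ← diagonal_one]
  congr 1
  ext i
  by_cases hi : i ∈ t <;> simp [hi]

theorem det_signDiagonal (t : Finset n) :
    (signDiagonal t : Matrix n n R).det = (-1) ^ t.card := by
  rw [signDiagonal, det_diagonal, Finset.prod_ite, Finset.prod_const, Finset.prod_const_one,
    mul_one, Finset.filter_mem_eq_inter, Finset.univ_inter]

theorem det_negRowsOn_signDiagonal_mul (s t : Finset n) (g : Matrix n n R) :
    (negRowsOn s (signDiagonal t * g)).det = (-1) ^ (s ∩ t).card * (negRowsOn s g).det := by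
  rw [signDiagonal, det_negRowsOn_diagonal_mul, Finset.prod_ite, Finset.prod_const,
    Finset.prod_const_one, mul_one, Finset.filter_mem_eq_inter, Finset.inter_comm]

omit [Fintype n] in
@[fun_prop]
theorem continuous_negRowsOn [TopologicalSpace R] [IsTopologicalRing R] (s : Finset n) :
    Continuous (negRowsOn s : Matrix n n R → Matrix n n R) := by
  refine continuous_pi fun i => continuous_pi fun j => ?_
  by_cases hi : i ∈ s <;> simp only [negRowsOn, of_apply, hi, if_true, if_false] <;> fun_prop

end CommRing

variable {n : Type*} [Fintype n] [DecidableEq n]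

theorem abs_det_negRowsOn_le {g : Matrix n n ℝ} (hg : gᵀ * g = 1) (s : Finset n) :
    |(negRowsOn s g).det| ≤ (Fintype.card n).factorial := by
  have hentry (i j : n) : |negRowsOn s g i j| ≤ 1 := by
    by_cases hi : i ∈ s
    · simpa [negRowsOn, hi] using
        entry_norm_bound_of_unitary (mem_unitaryGroup_iff'.mpr hg) i j
    · simp only [negRowsOn, of_apply, hi, if_false, one_apply]
      split_ifs <;> norm_num
  simpa using det_le (abv := AbsoluteValue.abs) hentry

variable {μ : Measure (Matrix n n ℝ)}

theorem integrable_det_negRowsOn [IsFiniteMeasure μ] (hμ : ∀ᵐ g ∂μ, gᵀ * g = 1)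
    (s : Finset n) : Integrable (fun g => (negRowsOn s g).det) μ :=
  Integrable.mono' (integrable_const ((Fintype.card n).factorial : ℝ))
    (by fun_prop : Continuous fun g : Matrix n n ℝ => (negRowsOn s g).det).aestronglyMeasurable
    (hμ.mono fun _ hg => abs_det_negRowsOn_le hg s)

theorem integral_det_negRowsOn_eq_zero
    (hinv : ∀ h : Matrix n n ℝ, hᵀ * h = 1 → h.det = 1 → Measure.map (fun g => h * g) μ = μ)
    {s : Finset n} (hs : s.Nonempty) (hs' : s ≠ Finset.univ) :
    ∫ g, (negRowsOn s g).det ∂μ = 0 := by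
  obtain ⟨i, hi⟩ := hs
  obtain ⟨j, hj⟩ : ∃ j, j ∉ s := by simpa [Finset.eq_univ_iff_forall] using hs'
  have hij : i ≠ j := ne_of_mem_of_not_mem hi hj
  have hdet : (signDiagonal {i, j} : Matrix n n ℝ).det = 1 := by
    rw [det_signDiagonal, Finset.card_pair hij]
    norm_num
  have hcut : s ∩ {i, j} = {i} := by
    rw [Finset.inter_comm, Finset.insert_inter_of_mem hi, Finset.singleton_inter_of_notMem hj]
    rfl
  refine integral_eq_zero_of_map_eq_of_comp_eq_neg (φ := fun g => signDiagonal {i, j} * g)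
    (by fun_prop) (hinv _ (signDiagonal_transpose_mul_self _) hdet)
    (by fun_prop : Continuous fun g : Matrix n n ℝ => (negRowsOn s g).det).aestronglyMeasurable
    fun g => ?_
  rw [det_negRowsOn_signDiagonal_mul, hcut, Finset.card_singleton, pow_one, neg_one_mul]

theorem integral_det_negRowsOn_univ [IsProbabilityMeasure μ] (hn : Even (Fintype.card n))
    (hμ : ∀ᵐ g ∂μ, g.det = 1) :
    ∫ g, (negRowsOn Finset.univ g).det ∂μ = 1 := by
  have hone : ∀ᵐ g ∂μ, (negRowsOn Finset.univ g).det = 1 := by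
    filter_upwards [hμ] with g hg
    rw [negRowsOn_univ, det_neg, hg, hn.neg_one_pow, one_mul]
  rw [integral_congr_ae hone]
  simp

theorem integral_det_one_sub_eq_two [Nonempty n] [IsProbabilityMeasure μ]
    (hn : Even (Fintype.card n)) (hsupp : ∀ᵐ g ∂μ, gᵀ * g = 1 ∧ g.det = 1)
    (hinv : ∀ h : Matrix n n ℝ, hᵀ * h = 1 → h.det = 1 → Measure.map (fun g => h * g) μ = μ) :
    ∫ g, (1 - g).det ∂μ = 2 := by
  simp_rw [det_one_sub_eq_sum_det_negRowsOn]
  rw [integral_finsetSum _ fun s _ => integrable_det_negRowsOn (hsupp.mono fun _ hg => hg.1) s,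
    Fintype.sum_eq_add ∅ Finset.univ (Finset.univ_neq_empty n).symm fun s hs =>
      integral_det_negRowsOn_eq_zero hinv (Finset.nonempty_iff_ne_empty.2 hs.1) hs.2,
    integral_det_negRowsOn_univ hn (hsupp.mono fun _ hg => hg.2)]
  norm_num

end Matrix

theorem statement2 (N : ℕ) (hN : 1 ≤ N)
    (μ : Measure (Matrix (Fin (2 * N)) (Fin (2 * N)) ℝ))
    [IsProbabilityMeasure μ]
    (hsupp : μ {g : Matrix (Fin (2 * N)) (Fin (2 * N)) ℝ | gᵀ * g = 1 ∧ g.det = 1}ᶜ = 0)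
    (hinv : ∀ h : Matrix (Fin (2 * N)) (Fin (2 * N)) ℝ, hᵀ * h = 1 → h.det = 1 →
      Measure.map (fun g => h * g) μ = μ) :
    ∫ g, (1 - g).det ∂μ = 2 := by
  have : Nonempty (Fin (2 * N)) := ⟨⟨0, by omega⟩⟩
  exact Matrix.integral_det_one_sub_eq_two (by simp) (mem_ae_iff.2 hsupp) hinv
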